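/- The map T preserves the measure μ: T is measurable and μ(T^{−1}A) = μ(A) for every measurable A ⊆ Φ; that is, the pushforward of μ = m × Π under T equals μ. -/

import Mathlib

open MeasureTheory Filter Topology

namespace RWRE

/-- `ℤ^d` -/
abbrev Zd (d : ℕ) := Fin d → ℤ

variable {Ω : Type*} {d N : ℕ}

/-- `q_i(ω) = p_{0 d_i}(ω)`. -/
noncomputable def q (p : Ω → Zd d → Zd d → ℝ) (dv : Fin N → Zd d) (ω : Ω) (i : Fin N) : ℝ :=
  p ω 0 (dv i)

/-- Partial sums `a_i(ω) = q_1(ω) + ⋯ + q_i(ω)`, `a_0 = 0`. -/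
noncomputable def aPt (p : Ω → Zd d → Zd d → ℝ) (dv : Fin N → Zd d) (ω : Ω) : ℕ → ℝ
  | 0 => 0
  | (i + 1) => aPt p dv ω i + (if h : i < N then q p dv ω ⟨i, h⟩ else 0)

/-- `i(s,ω)`: the unique `i` with `s ∈ I_i(ω) = [a_{i-1}(ω), a_i(ω))`. -/
noncomputable def idx [NeZero N] (p : Ω → Zd d → Zd d → ℝ) (dv : Fin N → Zd d)
    (s : ℝ) (ω : Ω) : Fin N :=
  if h : ∃ i : Fin N, aPt p dv ω i ≤ s ∧ s < aPt p dv ω (i + 1) then h.choose else 0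

/-- The displacement function `D(s,ω) = d_{i(s,ω)}`. -/
noncomputable def Dspl [NeZero N] (p : Ω → Zd d → Zd d → ℝ) (dv : Fin N → Zd d)
    (s : ℝ) (ω : Ω) : Zd d :=
  dv (idx p dv s ω)

/-- The fiber map `φ(s,ω) = q_{i(s,ω)}(ω)⁻¹ (s - a_{i(s,ω)-1}(ω))`. -/
noncomputable def fib [NeZero N] (p : Ω → Zd d → Zd d → ℝ) (dv : Fin N → Zd d)
    (s : ℝ) (ω : Ω) : ℝ :=
  (q p dv ω (idx p dv s ω))⁻¹ * (s - aPt p dv ω (idx p dv s ω))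

/-- The point-of-view-of-the-particle map `T(s,ω) = (φ(s,ω), τ_{D(s,ω)} ω)`. -/
noncomputable def T [NeZero N] (τ : Zd d → Ω → Ω) (p : Ω → Zd d → Zd d → ℝ)
    (dv : Fin N → Zd d) : ℝ × Ω → ℝ × Ω :=
  fun x => (fib p dv x.1 x.2, τ (Dspl p dv x.1 x.2) x.2)

/-- The walk `X_n = Σ_{k<n} D ∘ T^k`. -/
noncomputable def X [NeZero N] (τ : Zd d → Ω → Ω) (p : Ω → Zd d → Zd d → ℝ)
    (dv : Fin N → Zd d) (n : ℕ) (x : ℝ × Ω) : Zd d :=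
  ∑ k ∈ Finset.range n, Dspl p dv ((T τ p dv)^[k] x).1 ((T τ p dv)^[k] x).2

/-- `n`-step transition probabilities. -/
noncomputable def nstep (p : Ω → Zd d → Zd d → ℝ) (ω : Ω) : ℕ → Zd d → Zd d → ℝ
  | 0 => fun x y => if x = y then 1 else 0
  | (n + 1) => fun x y => ∑' z, nstep p ω n x z * p ω z y

/-!
Over a fixed environment `ω`, the unit interval is cut into the cells `I_i(ω)` of length
`q_i(ω)`, and `T` maps `I_i(ω) × {ω}` affinely onto `[0,1) × {τ_{d_i} ω}`, stretching by
`q_i(ω)⁻¹`. Hence the `ω`-slice of `T⁻¹ A` has Lebesgue measure `∑ᵢ q_i(ω) m(A_{τ_{d_i} ω})`.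
Equivariance rewrites `q_i(ω) = p_{0,d_i}(ω)` as `p_{-d_i,0}(τ_{d_i} ω)`, and invariance of `Π`
under `τ_{d_i}` removes the shift, so `μ(T⁻¹ A) = ∫ ∑ᵢ p_{-d_i,0}(η) m(A_η) dΠ(η)`. This is
`μ(A)` because the column sums `∑ₓ p_{x,0}(η)` of a bistochastic kernel equal `1`.
-/

theorem volume_preimage_inv_mul_sub {c : ℝ} (hc : 0 < c) (a : ℝ) (S : Set ℝ) :
    volume ((fun s => c⁻¹ * (s - a)) ⁻¹' S) = ENNReal.ofReal c * volume S := by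
  have h : (fun s => c⁻¹ * (s - a)) = (fun u => c⁻¹ * u) ∘ (fun s => s + -a) := by
    funext s; simp [sub_eq_add_neg]
  rw [h, Set.preimage_comp, measure_preimage_add_right,
    Real.volume_preimage_mul_left (inv_ne_zero hc.ne'), inv_inv, abs_of_pos hc]

theorem inv_mul_sub_mem_Ico_zero_one_iff {c : ℝ} (hc : 0 < c) (a s : ℝ) :
    c⁻¹ * (s - a) ∈ Set.Ico (0 : ℝ) 1 ↔ s ∈ Set.Ico a (a + c) := by
  simp only [Set.mem_Ico, ← div_eq_inv_mul, div_nonneg_iff, div_lt_one hc, sub_nonneg]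
  constructor
  · rintro ⟨h | h, h'⟩ <;> constructor <;> linarith
  · rintro ⟨h, h'⟩; exact ⟨Or.inl ⟨h, hc.le⟩, by linarith⟩

theorem sum_comp_eq_of_hasSum {β ι : Type*} [Fintype ι] {f : β → ℝ} {g : ι → β} {a : ℝ}
    (hg : Function.Injective g) (hf : ∀ y ∉ Set.range g, f y = 0) (h : HasSum f a) :
    ∑ i, f (g i) = a :=
  (((hg.hasSum_iff hf).2 h).unique (hasSum_fintype _)).symm

theorem sum_q_eq_one {p : Ω → Zd d → Zd d → ℝ} {dv : Fin N → Zd d} {ω : Ω}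
    (hdv : Function.Injective dv) (hnorm : HasSum (fun y => p ω 0 y) 1)
    (hrange : ∀ x y, p ω x y ≠ 0 → ∃ i, y - x = dv i) :
    ∑ i, q p dv ω i = 1 :=
  sum_comp_eq_of_hasSum (f := fun y => p ω 0 y) hdv
    (fun y hy => by_contra fun h => hy <| by
      obtain ⟨i, hi⟩ := hrange 0 y h
      exact ⟨i, by rw [← hi, sub_zero]⟩)
    hnorm

theorem sum_p_neg_zero_eq_one {p : Ω → Zd d → Zd d → ℝ} {dv : Fin N → Zd d} {ω : Ω}
    (hdv : Function.Injective dv) (hbis : HasSum (fun x => p ω x 0) 1)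
    (hrange : ∀ x y, p ω x y ≠ 0 → ∃ i, y - x = dv i) :
    ∑ i, p ω (-dv i) 0 = 1 :=
  sum_comp_eq_of_hasSum (fun _ _ h => hdv (neg_injective h))
    (fun x hx => by_contra fun h => hx <| by
      obtain ⟨i, hi⟩ := hrange x 0 h
      exact ⟨i, show -dv i = x by rw [← hi, zero_sub, neg_neg]⟩)
    hbis

section Cells

variable {p : Ω → Zd d → Zd d → ℝ} {dv : Fin N → Zd d} {ω : Ω}

variable (p dv ω) in
/-- `cell i` is the paper's `I_{i+1}(ω)`: `Fin N` indexes `d_1, …, d_N` from `0`. -/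
def cell (i : Fin N) : Set ℝ :=
  Set.Ico (aPt p dv ω i) (aPt p dv ω (i + 1))

theorem aPt_succ_fin (i : Fin N) : aPt p dv ω (i + 1) = aPt p dv ω i + q p dv ω i := by
  simp [aPt, i.isLt]

theorem aPt_eq_sum_range (n : ℕ) :
    aPt p dv ω n = ∑ j ∈ Finset.range n, if h : j < N then q p dv ω ⟨j, h⟩ else 0 := by
  induction n with
  | zero => rfl
  | succ n ih => rw [Finset.sum_range_succ, ← ih]; rfl

theorem aPt_N_eq_sum : aPt p dv ω N = ∑ i, q p dv ω i := by
  rw [aPt_eq_sum_range, ← Fin.sum_univ_eq_sum_range]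
  exact Finset.sum_congr rfl fun i _ => by simp [i.isLt]

theorem aPt_monotone (hq : ∀ i, 0 ≤ q p dv ω i) : Monotone (aPt p dv ω) := by
  refine monotone_nat_of_le_succ fun n => ?_
  show aPt p dv ω n ≤ aPt p dv ω n + _
  split
  · simpa using hq _
  · simp

theorem pairwise_disjoint_cell (hq : ∀ i, 0 ≤ q p dv ω i) :
    Pairwise (Function.onFun Disjoint (cell p dv ω)) :=
  (aPt_monotone hq).pairwise_disjoint_on_Ico_succ.comp_of_injective Fin.val_injective

theorem iUnion_cell (hq : ∀ i, 0 ≤ q p dv ω i) (hsum : ∑ i, q p dv ω i = 1) :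
    ⋃ i, cell p dv ω i = Set.Ico 0 1 := by
  have hN : aPt p dv ω N = 1 := aPt_N_eq_sum.trans hsum
  refine subset_antisymm (Set.iUnion_subset fun i => ?_) fun s hs => ?_
  · rw [← hN]
    exact Set.Ico_subset_Ico (aPt_monotone hq (Nat.zero_le _)) (aPt_monotone hq i.isLt)
  · rw [← hN] at hs
    obtain ⟨j, hj, hsj⟩ := Set.mem_iUnion₂.1 (Ico_subset_biUnion_Ico N (aPt p dv ω) hs)
    exact Set.mem_iUnion.2 ⟨⟨j, Finset.mem_range.1 hj⟩, hsj⟩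

theorem eq_of_mem_cell (hq : ∀ i, 0 ≤ q p dv ω i) {s : ℝ} {i j : Fin N}
    (hi : s ∈ cell p dv ω i) (hj : s ∈ cell p dv ω j) : i = j :=
  (pairwise_disjoint_cell hq).eq (Set.not_disjoint_iff.2 ⟨s, hi, hj⟩)

variable [NeZero N]

theorem idx_eq_iff (hq : ∀ i, 0 ≤ q p dv ω i) (s : ℝ) (i : Fin N) :
    idx p dv s ω = i ↔ s ∈ cell p dv ω i ∨ (i = 0 ∧ ∀ j, s ∉ cell p dv ω j) := by
  by_cases hex : ∃ j : Fin N, aPt p dv ω j ≤ s ∧ s < aPt p dv ω (j + 1)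
  · have hne : ¬ ∀ j, s ∉ cell p dv ω j := fun h => h _ hex.choose_spec
    rw [idx, dif_pos hex]
    exact ⟨fun h => .inl (h ▸ hex.choose_spec),
      fun h => eq_of_mem_cell hq hex.choose_spec (h.resolve_right (hne ·.2))⟩
  · rw [idx, dif_neg hex]
    exact ⟨fun h => .inr ⟨h.symm, not_exists.1 hex⟩,
      fun h => (h.resolve_left fun hi => hex ⟨i, hi⟩).1.symm⟩

theorem idx_eq_of_mem_cell (hq : ∀ i, 0 ≤ q p dv ω i) {s : ℝ} {i : Fin N}
    (hs : s ∈ cell p dv ω i) : idx p dv s ω = i :=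
  (idx_eq_iff hq s i).2 (.inl hs)

theorem T_of_mem_cell (τ : Zd d → Ω → Ω) (hq : ∀ i, 0 ≤ q p dv ω i) {s : ℝ} {i : Fin N}
    (hs : s ∈ cell p dv ω i) :
    T τ p dv (s, ω) = ((q p dv ω i)⁻¹ * (s - aPt p dv ω i), τ (dv i) ω) := by
  simp [T, fib, Dspl, idx_eq_of_mem_cell hq hs]

theorem preimage_T_inter_cell (τ : Zd d → Ω → Ω) (hq : ∀ i, 0 ≤ q p dv ω i) {i : Fin N}
    (hqi : 0 < q p dv ω i) (A : Set (ℝ × Ω)) :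
    (fun s => (s, ω)) ⁻¹' (T τ p dv ⁻¹' A) ∩ cell p dv ω i =
      (fun s => (q p dv ω i)⁻¹ * (s - aPt p dv ω i)) ⁻¹'
        ((fun t => (t, τ (dv i) ω)) ⁻¹' A ∩ Set.Ico 0 1) := by
  ext s
  have hcell : s ∈ cell p dv ω i ↔ (q p dv ω i)⁻¹ * (s - aPt p dv ω i) ∈ Set.Ico 0 1 := by
    rw [inv_mul_sub_mem_Ico_zero_one_iff hqi, cell, aPt_succ_fin]
  simp only [Set.mem_inter_iff, Set.mem_preimage, ← hcell]
  exact and_congr_left fun hs => by rw [T_of_mem_cell τ hq hs]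

theorem volume_preimage_T_inter_cell (τ : Zd d → Ω → Ω) (hq : ∀ i, 0 ≤ q p dv ω i)
    (i : Fin N) (A : Set (ℝ × Ω)) :
    volume ((fun s => (s, ω)) ⁻¹' (T τ p dv ⁻¹' A) ∩ cell p dv ω i) =
      ENNReal.ofReal (q p dv ω i) *
        volume.restrict (Set.Ico 0 1) ((fun t => (t, τ (dv i) ω)) ⁻¹' A) := by
  rcases (hq i).eq_or_lt with hqi | hqi
  · rw [cell, aPt_succ_fin, ← hqi, add_zero, Set.Ico_self, Set.inter_empty, measure_empty,
      ENNReal.ofReal_zero, zero_mul]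
  · rw [preimage_T_inter_cell τ hq hqi, volume_preimage_inv_mul_sub hqi,
      Measure.restrict_apply' measurableSet_Ico]

theorem restrict_preimage_T_slice (τ : Zd d → Ω → Ω) (hq : ∀ i, 0 ≤ q p dv ω i)
    (hsum : ∑ i, q p dv ω i = 1) (A : Set (ℝ × Ω)) :
    volume.restrict (Set.Ico 0 1) ((fun s => (s, ω)) ⁻¹' (T τ p dv ⁻¹' A)) =
      ∑ i, ENNReal.ofReal (q p dv ω i) *
        volume.restrict (Set.Ico 0 1) ((fun t => (t, τ (dv i) ω)) ⁻¹' A) := by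
  conv_lhs => rw [← iUnion_cell hq hsum,
    Measure.restrict_iUnion (pairwise_disjoint_cell hq) fun _ => measurableSet_Ico,
    Measure.sum_apply_of_countable, tsum_fintype]
  refine Finset.sum_congr rfl fun i _ => ?_
  exact (Measure.restrict_apply' measurableSet_Ico).trans (volume_preimage_T_inter_cell τ hq i A)

end Cells

section Measurability

variable [MeasurableSpace Ω] {p : Ω → Zd d → Zd d → ℝ} (dv : Fin N → Zd d)

theorem measurable_aPt (hp_meas : ∀ x y, Measurable fun ω => p ω x y) (n : ℕ) :
    Measurable fun ω => aPt p dv ω n := by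
  simp only [aPt_eq_sum_range]
  refine Finset.measurable_sum _ fun j _ => ?_
  split
  · exact hp_meas _ _
  · exact measurable_const

theorem measurableSet_mem_cell (hp_meas : ∀ x y, Measurable fun ω => p ω x y) (i : Fin N) :
    MeasurableSet {x : ℝ × Ω | x.1 ∈ cell p dv x.2 i} :=
  (measurableSet_le ((measurable_aPt dv hp_meas _).comp measurable_snd) measurable_fst).inter
    (measurableSet_lt measurable_fst ((measurable_aPt dv hp_meas (i + 1)).comp measurable_snd))

variable [NeZero N]

theorem measurable_idx (hp_meas : ∀ x y, Measurable fun ω => p ω x y)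
    (hq : ∀ ω i, 0 ≤ q p dv ω i) :
    Measurable fun x : ℝ × Ω => idx p dv x.1 x.2 := by
  refine measurable_to_countable' fun i => ?_
  have h : (fun x : ℝ × Ω => idx p dv x.1 x.2) ⁻¹' {i} =
      {x | x.1 ∈ cell p dv x.2 i} ∪ ({_x | i = 0} ∩ ⋂ j, {x | x.1 ∈ cell p dv x.2 j}ᶜ) := by
    ext x
    simp [idx_eq_iff (hq x.2)]
  rw [h]
  exact (measurableSet_mem_cell dv hp_meas i).union <|
    (MeasurableSet.const _).inter <| .iInter fun j => (measurableSet_mem_cell dv hp_meas j).compl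

theorem measurable_T (τ : Zd d → Ω → Ω) (hτ : ∀ z, Measurable (τ z))
    (hp_meas : ∀ x y, Measurable fun ω => p ω x y) (hq : ∀ ω i, 0 ≤ q p dv ω i) :
    Measurable (T τ p dv) := by
  have hF : Measurable fun y : (ℝ × Ω) × Fin N =>
      ((q p dv y.1.2 y.2)⁻¹ * (y.1.1 - aPt p dv y.1.2 y.2), τ (dv y.2) y.1.2) := by
    refine measurable_from_prod_countable_left fun i => .prod ?_ ?_
    · exact ((hp_meas 0 (dv i)).comp measurable_snd).inv.mul
        (measurable_fst.sub ((measurable_aPt dv hp_meas i).comp measurable_snd))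
    · exact (hτ (dv i)).comp measurable_snd
  exact hF.comp (measurable_id.prodMk (measurable_idx dv hp_meas hq))

end Measurability

theorem lintegral_sum_q_mul_comp_shift [MeasurableSpace Ω] (Pm : Measure Ω)
    (τ : Zd d → Ω → Ω) (p : Ω → Zd d → Zd d → ℝ) (dv : Fin N → Zd d)
    (hτ : ∀ z, MeasurePreserving (τ z) Pm Pm) (hdv : Function.Injective dv)
    (hp_meas : ∀ x y, Measurable fun ω => p ω x y) (hp_nn : ∀ ω x y, 0 ≤ p ω x y)
    (hbis : ∀ ω y, HasSum (fun x => p ω x y) 1)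
    (hrange : ∀ ω x y, p ω x y ≠ 0 → ∃ i, y - x = dv i)
    (hequiv : ∀ ω x y z, p (τ z ω) x y = p ω (x + z) (y + z))
    {g : Ω → ENNReal} (hg : Measurable g) :
    ∫⁻ ω, ∑ i, ENNReal.ofReal (q p dv ω i) * g (τ (dv i) ω) ∂Pm = ∫⁻ ω, g ω ∂Pm := by
  have hq : ∀ ω i, q p dv ω i = p (τ (dv i) ω) (-dv i) 0 := fun ω i => by
    simp [q, hequiv]
  have hmeas : ∀ i, Measurable fun η => ENNReal.ofReal (p η (-dv i) 0) * g η := fun i =>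
    (hp_meas _ _).ennreal_ofReal.mul hg
  calc ∫⁻ ω, ∑ i, ENNReal.ofReal (q p dv ω i) * g (τ (dv i) ω) ∂Pm
      = ∑ i, ∫⁻ ω, (fun η => ENNReal.ofReal (p η (-dv i) 0) * g η) (τ (dv i) ω) ∂Pm := by
        simp_rw [hq]
        exact lintegral_finsetSum _ fun i _ => (hmeas i).comp (hτ (dv i)).measurable
    _ = ∫⁻ η, ∑ i, ENNReal.ofReal (p η (-dv i) 0) * g η ∂Pm := by
        rw [lintegral_finsetSum _ fun i _ => hmeas i]
        exact Finset.sum_congr rfl fun i _ => (hτ (dv i)).lintegral_comp (hmeas i)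
    _ = ∫⁻ η, g η ∂Pm := by
        refine lintegral_congr fun η => ?_
        rw [← Finset.sum_mul, ← ENNReal.ofReal_sum_of_nonneg fun i _ => hp_nn _ _ _, sum_p_neg_zero_eq_one hdv (hbis η 0) (hrange η),
          ENNReal.ofReal_one, one_mul]

theorem T_measurePreserving_general
    {d N : ℕ} [NeZero N]
    {Ω : Type*} [MeasurableSpace Ω] (Pm : Measure Ω) [IsProbabilityMeasure Pm]
    (τ : Zd d → Ω → Ω) (p : Ω → Zd d → Zd d → ℝ) (dv : Fin N → Zd d)
    (hτ : ∀ z, MeasurePreserving (τ z) Pm Pm)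
    (hdv : Function.Injective dv)
    (hp_meas : ∀ x y, Measurable fun ω => p ω x y)
    (hp_nn : ∀ ω x y, 0 ≤ p ω x y)
    (hnorm : ∀ ω x, HasSum (fun y => p ω x y) 1)
    (hbis : ∀ ω y, HasSum (fun x => p ω x y) 1)
    (hrange : ∀ ω x y, p ω x y ≠ 0 → ∃ i, y - x = dv i)
    (hequiv : ∀ ω x y z, p (τ z ω) x y = p ω (x + z) (y + z)) :
    MeasurePreserving (T τ p dv)
      ((volume.restrict (Set.Ico (0:ℝ) 1)).prod Pm)
      ((volume.restrict (Set.Ico (0:ℝ) 1)).prod Pm) := by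
  have hq : ∀ ω i, 0 ≤ q p dv ω i := fun ω i => hp_nn ω 0 (dv i)
  have hsum : ∀ ω, ∑ i, q p dv ω i = 1 := fun ω => sum_q_eq_one hdv (hnorm ω 0) (hrange ω)
  have hT : Measurable (T τ p dv) := measurable_T dv τ (fun z => (hτ z).measurable) hp_meas hq
  refine ⟨hT, Measure.ext fun A hA => ?_⟩
  rw [Measure.map_apply hT hA, Measure.prod_apply_symm (hT hA), Measure.prod_apply_symm hA]
  simp_rw [restrict_preimage_T_slice τ (hq _) (hsum _)]
  exact lintegral_sum_q_mul_comp_shift Pm τ p dv hτ hdv hp_meas hp_nn hbis hrange hequiv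
    (measurable_measure_prodMk_right hA)

/-- The map `T` preserves the measure `μ = m × Π`. -/
theorem T_measurePreserving
    {d N : ℕ} [NeZero N] (hd : 1 ≤ d)
    {Ω : Type*} [MeasurableSpace Ω] (Pm : Measure Ω) [IsProbabilityMeasure Pm]
    (τ : Zd d → Ω → Ω) (p : Ω → Zd d → Zd d → ℝ) (dv : Fin N → Zd d)
    (hτ : ∀ z, MeasurePreserving (τ z) Pm Pm)
    (hτ_zero : τ 0 = id)
    (hτ_add : ∀ z z' ω, τ z (τ z' ω) = τ (z + z') ω)
    (hdv : Function.Injective dv)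
    (hp_meas : ∀ x y, Measurable fun ω => p ω x y)
    (hp_nn : ∀ ω x y, 0 ≤ p ω x y)
    (hp_le : ∀ ω x y, p ω x y ≤ 1)
    (hnorm : ∀ ω x, HasSum (fun y => p ω x y) 1)
    (hbis : ∀ ω y, HasSum (fun x => p ω x y) 1)
    (hrange : ∀ ω x y, p ω x y ≠ 0 → ∃ i, y - x = dv i)
    (hequiv : ∀ ω x y z, p (τ z ω) x y = p ω (x + z) (y + z)) :
    MeasurePreserving (T τ p dv)
      ((volume.restrict (Set.Ico (0:ℝ) 1)).prod Pm)
      ((volume.restrict (Set.Ico (0:ℝ) 1)).prod Pm) :=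
  T_measurePreserving_general Pm τ p dv hτ hdv hp_meas hp_nn hnorm hbis hrange hequiv

end RWRE
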